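/- arXiv:1812.03698 — 2 statements merged into one kernel-verified Lean document; each statement's English description precedes it below -/
import Mathlib

section
/- Let g = sp_{2n} (intro realisation, indices −n,…,−1,1,…,n), g_0 = sp_{2n−2} = span{F_{ij} : −n+1 ≤ i,j ≤ n−1}, and r = span{F_{n,i} : −n ≤ i ≤ n−1, i ≠ 0}. With the factor sequence F_{n,−n}^{α_1} F_{n,−1}^{α_2} F_{n,−2}^{α_3}⋯F_{n,−n+1}^{α_n} F_{n,1}^{α_{n+1}}⋯F_{n,n−1}^{α_{2n−1}} for elements of U(r), the monomial order of Definition 2.1 on S(r) — a monomial with exponent tuple ᾱ and h-weight ν is smaller than one with exponent tuple ᾱ' and h-weight ν' iff either ν − ν' is a positive root of sp_{2n}, or ν − ν' is not a root and ᾱ < ᾱ' lexicographically — satisfies condition (br-order). -/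
/-!
Since `x v_λ = 0`, we have `x m v_λ = [x, m] v_λ` for every ordered monomial `m ∈ S(r)`. As
`[n₀⁺, r] ⊆ r` and `[r, r] = ℂ F_{n,−n}` with `F_{n,−n}` the first factor, `[x, m]` straightens
into ordered monomials of `S(r)`, all of `h`-weight `wt m + wt x`. The weight of `x` is a positive
root, so each of them is smaller than `m` by the first clause of the order, without any
`n₀⁻`-factors.
-/

attribute [local instance 100] LieRing.ofAssociativeRing

abbrev glC (m : ℕ) := Matrix (Fin m) (Fin m) ℂ

/-- The position (as an integer in `[0, 2n)`) of the signed index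
`i ∈ {−n, …, −1, 1, …, n}`. -/
def posC (n : ℕ) (i : ℤ) : ℤ := if i < 0 then (n : ℤ) + i else (n : ℤ) + i - 1

/-- The matrix unit `E_{ab}` with rows and columns indexed by `−n, …, −1, 1, …, n`. -/
def EglZ (n : ℕ) (a b : ℤ) : glC (2 * n) :=
  Matrix.of fun p q => if ((p : ℕ) : ℤ) = posC n a ∧ ((q : ℕ) : ℤ) = posC n b then 1 else 0

def sgnZ (i : ℤ) : ℂ := if 0 < i then 1 else -1

/-- `F_{ij} = E_{ij} − sgn i · sgn j · E_{−j,−i}`. -/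
noncomputable def FmatZ (n : ℕ) (i j : ℤ) : glC (2 * n) :=
  EglZ n i j - (sgnZ i * sgnZ j) • EglZ n (-j) (-i)

/-- `i` is a valid index: `i ≠ 0` and `|i| ≤ n`. -/
def ValidC (n : ℕ) (i : ℤ) : Prop := i ≠ 0 ∧ |i| ≤ (n : ℤ)

instance (n : ℕ) (i : ℤ) : Decidable (ValidC n i) := by unfold ValidC; infer_instance

/-- The symplectic Lie algebra `sp_{2n}`, the span of the `F_{ij}`. -/
noncomputable def spAlgC (n : ℕ) : LieSubalgebra ℂ (glC (2 * n)) :=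
  LieSubalgebra.lieSpan ℂ _ {x | ∃ i j : ℤ, ValidC n i ∧ ValidC n j ∧ x = FmatZ n i j}

/-- `F_{ij}` as an element of `sp_{2n}` (zero for invalid indices). -/
noncomputable def FspC (n : ℕ) (i j : ℤ) : spAlgC n :=
  if h : ValidC n i ∧ ValidC n j then
    ⟨FmatZ n i j, LieSubalgebra.subset_lieSpan ⟨i, j, h.1, h.2, rfl⟩⟩
  else 0

/-- The index of the `t`-th factor in the sequence
`F_{k,−k}, F_{k,−1}, F_{k,−2}, …, F_{k,−k+1}, F_{k,1}, …, F_{k,k−1}`. -/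
def facC (k t : ℕ) : ℤ := if t = 0 then -(k : ℤ) else if t ≤ k - 1 then -(t : ℤ) else (t : ℤ) - k + 1

/-- Action on `v` of the `S(r)`-monomial
`F_{n,−n}^{e 0} F_{n,−1}^{e 1} ⋯ F_{n,−n+1}^{e (n−1)} F_{n,1}^{e n} ⋯ F_{n,n−1}^{e (2n−2)}`
(the leftmost factor acts last). -/
noncomputable def rActC (n : ℕ) {V : Type} [AddCommGroup V] [Module ℂ V]
    [LieRingModule (spAlgC n) V] [LieModule ℂ (spAlgC n) V] (e : ℕ → ℕ) (v : V) : V :=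
  (List.range (2 * n - 1)).foldr
    (fun t w => ((LieModule.toEnd ℂ (spAlgC n) V (FspC n (n : ℤ) (facC n t))) ^ (e t)) w) v

/-- The exponents vanish outside `[0, 2n−2]`. -/
def SuppC (n : ℕ) (e : ℕ → ℕ) : Prop := ∀ t, 2 * n - 1 ≤ t → e t = 0

/-- The `h`-weight of the root vector `F_{ij}`, as a function on the basis
`F_{11}, …, F_{nn}` of the Cartan subalgebra (`1`-based index `k`). -/
def wtF (i j : ℤ) : ℕ → ℤ :=
  fun k =>
    (if 0 < i then (if (k : ℤ) = i then 1 else 0) else -(if (k : ℤ) = -i then 1 else 0)) -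
      (if 0 < j then (if (k : ℤ) = j then 1 else 0) else -(if (k : ℤ) = -j then 1 else 0))

/-- The `h`-weight of an `S(r)`-monomial at level `k`. -/
def wtLev (k : ℕ) (e : ℕ → ℕ) : ℕ → ℤ :=
  fun m => ∑ t ∈ Finset.range (2 * k - 1), (e t : ℤ) * wtF (k : ℤ) (facC k t) m

/-- The positive roots of `sp_{2k}`: the weights of the `F_{ij}` with `i < j`. -/
def PosRootsC (k : ℕ) : Set (ℕ → ℤ) :=
  {w | ∃ i j : ℤ, ValidC k i ∧ ValidC k j ∧ i < j ∧ w = wtF i j}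

/-- The roots of `sp_{2k}`. -/
def RootsC (k : ℕ) : Set (ℕ → ℤ) := {w | w ∈ PosRootsC k ∨ -w ∈ PosRootsC k}

/-- The lexicographic order on exponent tuples of length `N`. -/
def lexLt (N : ℕ) (e f : ℕ → ℕ) : Prop := ∃ t < N, e t < f t ∧ ∀ s < t, e s = f s

/-- The monomial order of Definition 2.1 on `S(r)`-monomials at level `k`:
`e < f` iff the difference of their `h`-weights is a positive root, or it is not a root
and `e` precedes `f` lexicographically. -/
def ltC (k : ℕ) (e f : ℕ → ℕ) : Prop :=
  (wtLev k e - wtLev k f) ∈ PosRootsC k ∨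
    ((wtLev k e - wtLev k f) ∉ RootsC k ∧ lexLt (2 * k - 1) e f)

/-- `e ∈ ess(λ) ∩ S(r)` for a fixed module with highest weight vector `v`:
`e • v` is not in the span of the `m̃ • v` with `m̃ < e`; such an `m̃` factors as
`m̃₀ m̃₁` with `m̃₁ ∈ S(r)`, `m̃₁ < e` in the order of Definition 2.1 and `m̃₀` a word
in the root vectors `F_{ij}` (`i > j`, `|i|, |j| ≤ n−1`) of `n₀⁻ ⊂ sp_{2n−2}`. -/
noncomputable def EssRC (n : ℕ) {V : Type} [AddCommGroup V] [Module ℂ V]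
    [LieRingModule (spAlgC n) V] [LieModule ℂ (spAlgC n) V] (v : V) (e : ℕ → ℕ) : Prop :=
  rActC n e v ∉
    Submodule.span ℂ
      {u : V | ∃ f, SuppC n f ∧ ltC n f e ∧
        ∃ l : List (ℤ × ℤ), (∀ x ∈ l, ValidC (n - 1) x.1 ∧ ValidC (n - 1) x.2 ∧ x.2 < x.1) ∧
          u = l.foldr (fun (x : ℤ × ℤ) w => ⁅FspC n x.1 x.2, w⁆) (rActC n f v)}

section Indices

variable {n : ℕ}

lemma ValidC.of_pred {i : ℤ} (h : ValidC (n - 1) i) : ValidC n i :=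
  ⟨h.1, h.2.trans (by omega)⟩

lemma ValidC.neg {i : ℤ} (h : ValidC n i) : ValidC n (-i) :=
  ⟨neg_ne_zero.mpr h.1, by rw [abs_neg]; exact h.2⟩

lemma ValidC.last {i : ℤ} (h : ValidC n i) : ValidC n n := by
  have := h.1; have := abs_le.mp h.2
  exact ⟨by omega, by rw [abs_of_nonneg (by omega)]⟩

lemma ValidC.ne_last_of_pred {i : ℤ} (h : ValidC (n - 1) i) : i ≠ n ∧ -i ≠ n := by
  have := h.1; have := abs_le.mp h.2
  omega

lemma ValidC.posC_mem {i : ℤ} (h : ValidC n i) : 0 ≤ posC n i ∧ posC n i < 2 * n := by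
  obtain ⟨h0, hb⟩ := h
  rw [abs_le] at hb
  unfold posC; split <;> omega

lemma facC_zero : facC n 0 = -n := rfl

lemma facC_valid {t : ℕ} (ht : t < 2 * n - 1) : ValidC n (facC n t) ∧ facC n t ≠ n := by
  refine ⟨⟨?_, abs_le.mpr ⟨?_, ?_⟩⟩, ?_⟩ <;> (unfold facC; split_ifs <;> omega)

lemma exists_facC_eq {k : ℤ} (hk : ValidC n k) (hkn : k ≠ n) :
    ∃ t < 2 * n - 1, facC n t = k := by
  have := hk.1; have := abs_le.mp hk.2
  refine ⟨if k = -n then 0 else if k < 0 then (-k).toNat else (k + n - 1).toNat,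
    by split_ifs <;> omega, by unfold facC; split_ifs <;> omega⟩

end Indices

section MatrixUnits

variable {n : ℕ}

def idxC (n : ℕ) (i : ℤ) (h : ValidC n i) : Fin (2 * n) :=
  ⟨(posC n i).toNat, by have := h.posC_mem; omega⟩

lemma idxC_inj {i j : ℤ} (hi : ValidC n i) (hj : ValidC n j) :
    idxC n i hi = idxC n j hj ↔ i = j := by
  refine ⟨fun h => ?_, fun h => by subst h; rfl⟩
  have h' := congrArg (fun p : Fin (2 * n) => ((p : ℕ) : ℤ)) h
  have := hi.posC_mem; have := hj.posC_mem
  obtain ⟨hi0, hib⟩ := hi; obtain ⟨hj0, hjb⟩ := hj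
  rw [abs_le] at hib hjb
  simp only [idxC] at h'
  unfold posC at *; split_ifs at h' <;> omega

lemma EglZ_eq_single {a b : ℤ} (ha : ValidC n a) (hb : ValidC n b) :
    EglZ n a b = Matrix.single (idxC n a ha) (idxC n b hb) 1 := by
  ext p q
  have := ha.posC_mem; have := hb.posC_mem
  simp only [EglZ, Matrix.of_apply, Matrix.single_apply, idxC, Fin.ext_iff]
  congr 1
  apply propext; constructor <;> rintro ⟨h1, h2⟩ <;> constructor <;> omega

lemma EglZ_mul_EglZ {a b c d : ℤ} (ha : ValidC n a) (hb : ValidC n b) (hc : ValidC n c)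
    (hd : ValidC n d) : EglZ n a b * EglZ n c d = if b = c then EglZ n a d else 0 := by
  simp only [EglZ_eq_single, ha, hb, hc, hd]
  split_ifs with h
  · subst h; rw [Matrix.single_mul_single_same, one_mul]
  · exact Matrix.single_mul_single_of_ne (h := fun h' => h ((idxC_inj hb hc).mp h')) ..

lemma sgnZ_neg {i : ℤ} (h : i ≠ 0) : sgnZ (-i) = -sgnZ i := by
  unfold sgnZ
  split_ifs <;> first | (exfalso; omega) | norm_num

lemma sgnZ_sq (i : ℤ) : sgnZ i ^ 2 = 1 := by
  unfold sgnZ; split <;> norm_num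

lemma sgnZ_pow_three (i : ℤ) : sgnZ i ^ 3 = sgnZ i := by
  rw [pow_succ, sgnZ_sq, one_mul]

theorem lie_FmatZ_FmatZ {i j k l : ℤ} (hi : ValidC n i) (hj : ValidC n j) (hk : ValidC n k)
    (hl : ValidC n l) :
    ⁅FmatZ n i j, FmatZ n k l⁆ =
      (if j = k then FmatZ n i l else 0) - (if l = i then FmatZ n k j else 0) -
        (if k = -i then (sgnZ i * sgnZ j) • FmatZ n (-j) l else 0) +
        (if l = -j then (sgnZ i * sgnZ j) • FmatZ n k (-i) else 0) := by
  rw [Ring.lie_def]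
  simp only [FmatZ, sub_mul, mul_sub, smul_mul_assoc, mul_smul_comm,
    EglZ_mul_EglZ, hi, hj, hk, hl, hi.neg, hj.neg, hk.neg, hl.neg, neg_inj]
  have hi0 := hi.1; have hj0 := hj.1; have hk0 := hk.1; have hl0 := hl.1
  -- in each case the coefficients of the matrix units agree modulo `sgnZ x ^ 2 = 1`
  split_ifs <;> (try omega) <;> subst_vars <;>
    (try simp only [sgnZ_neg hi0, sgnZ_neg hj0, sgnZ_neg hk0, sgnZ_neg hl0, neg_neg]) <;>
    match_scalars <;> (try ring_nf) <;> (try simp only [sgnZ_sq, sgnZ_pow_three]) <;> ring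

lemma FspC_coe {i j : ℤ} (hi : ValidC n i) (hj : ValidC n j) :
    (FspC n i j : glC (2 * n)) = FmatZ n i j := by
  rw [FspC, dif_pos ⟨hi, hj⟩]

theorem lie_FspC_FspC {i j k l : ℤ} (hi : ValidC n i) (hj : ValidC n j) (hk : ValidC n k)
    (hl : ValidC n l) :
    ⁅FspC n i j, FspC n k l⁆ =
      (if j = k then FspC n i l else 0) - (if l = i then FspC n k j else 0) -
        (if k = -i then (sgnZ i * sgnZ j) • FspC n (-j) l else 0) +
        (if l = -j then (sgnZ i * sgnZ j) • FspC n k (-i) else 0) := by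
  apply Subtype.ext
  rw [LieSubalgebra.coe_bracket, FspC_coe hi hj, FspC_coe hk hl, lie_FmatZ_FmatZ hi hj hk hl]
  split_ifs <;> simp [FspC_coe, hi, hj, hk, hl, hi.neg, hj.neg]

theorem lie_FspC_last_FspC_last {k l : ℤ} (hk : ValidC n k) (hl : ValidC n l)
    (hkn : k ≠ n) (hln : l ≠ n) :
    ⁅FspC n n k, FspC n n l⁆ = if l = -k then sgnZ k • FspC n n (-n) else 0 := by
  have hn0 : (n : ℤ) ≠ -n := by have := hk.last.1; omega
  have hsn : sgnZ n = 1 := if_pos (by have := hk.last.1; omega)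
  rw [lie_FspC_FspC hk.last hk hk.last hl]
  simp [hkn, hln, hn0, hsn]

theorem lie_FspC_FspC_last {i j k : ℤ} (hi : ValidC (n - 1) i) (hj : ValidC (n - 1) j)
    (hk : ValidC n k) :
    ⁅FspC n i j, FspC n n k⁆ =
      (if k = -j then (sgnZ i * sgnZ j) • FspC n n (-i) else 0) -
        (if k = i then FspC n n j else 0) := by
  obtain ⟨-, hnegi⟩ := hi.ne_last_of_pred
  obtain ⟨hjn, -⟩ := hj.ne_last_of_pred
  rw [lie_FspC_FspC hi.of_pred hj.of_pred hk.last hk]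
  simp [hjn, Ne.symm hnegi]
  abel

end MatrixUnits

section Exponents

variable {n : ℕ}

def idxWt (i : ℤ) : ℕ → ℤ :=
  fun k => if 0 < i then (if (k : ℤ) = i then 1 else 0) else -(if (k : ℤ) = -i then 1 else 0)

lemma wtF_eq_sub (i j : ℤ) : wtF i j = idxWt i - idxWt j := rfl

lemma idxWt_neg {i : ℤ} (h : i ≠ 0) : idxWt (-i) = -idxWt i := by
  funext k
  simp only [idxWt, Pi.neg_apply, neg_neg]
  split_ifs <;> omega

lemma wtF_add_wtF (a i j : ℤ) : wtF a i + wtF i j = wtF a j := by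
  rw [wtF_eq_sub, wtF_eq_sub, wtF_eq_sub]
  abel

lemma wtF_neg_add_wtF {i j : ℤ} (hi : i ≠ 0) (hj : j ≠ 0) (a : ℤ) :
    wtF a (-j) + wtF i j = wtF a (-i) := by
  rw [wtF_eq_sub, wtF_eq_sub, wtF_eq_sub, idxWt_neg hi, idxWt_neg hj]
  abel

lemma wtF_neg_add_wtF_self {a k : ℤ} (ha : a ≠ 0) (hk : k ≠ 0) :
    wtF a (-k) + wtF a k = wtF a (-a) := by
  rw [wtF_eq_sub, wtF_eq_sub, wtF_eq_sub, idxWt_neg hk, idxWt_neg ha]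
  abel

def degC (n : ℕ) (f : ℕ → ℕ) : ℕ := ∑ t ∈ Finset.range (2 * n - 1), f t

lemma degC_add_single {f : ℕ → ℕ} {t : ℕ} (ht : t < 2 * n - 1) :
    degC n (f + Pi.single t 1) = degC n f + 1 := by
  simp [degC, Finset.sum_add_distrib, ht]

lemma wtLev_add_single {f : ℕ → ℕ} {t : ℕ} (ht : t < 2 * n - 1) :
    wtLev n (f + Pi.single t 1) = wtLev n f + wtF n (facC n t) := by
  funext m
  simp [wtLev, add_mul, Finset.sum_add_distrib, Pi.single_apply, ht]

lemma SuppC.mono {f g : ℕ → ℕ} (hf : SuppC n f) (h : g ≤ f) : SuppC n g :=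
  fun t ht => Nat.eq_zero_of_le_zero ((h t).trans (hf t ht).le)

lemma SuppC.add_single {f : ℕ → ℕ} {t : ℕ} (hf : SuppC n f) (ht : t < 2 * n - 1) :
    SuppC n (f + Pi.single t 1) := fun s hs => by
  simp [hf s hs, show s ≠ t by omega]

lemma exists_eq_add_single_of_ne_zero {f : ℕ → ℕ} {t₁ : ℕ} (h : f t₁ ≠ 0) :
    ∃ t₀ ≤ t₁, ∃ g : ℕ → ℕ, f = g + Pi.single t₀ 1 ∧ ∀ s < t₀, g s = 0 := by
  classical
  have hex : ∃ t, f t ≠ 0 := ⟨t₁, h⟩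
  refine ⟨Nat.find hex, Nat.find_min' hex h, f - Pi.single (Nat.find hex) 1, ?_, fun s hs => ?_⟩
  · funext t
    rcases eq_or_ne t (Nat.find hex) with rfl | ht
    · have := Nat.find_spec hex
      simp only [Pi.add_apply, Pi.sub_apply, Pi.single_eq_same]
      omega
    · simp [ht]
  · simpa [hs.ne] using Nat.find_min hex hs

@[elab_as_elim]
theorem SuppC.induction_on_front {P : (ℕ → ℕ) → Prop} (zero : P 0)
    (add_single : ∀ f t, t < 2 * n - 1 → SuppC n f → (∀ s < t, f s = 0) → P f →
      P (f + Pi.single t 1))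
    {f : ℕ → ℕ} (hf : SuppC n f) : P f := by
  induction hd : degC n f generalizing f with
  | zero =>
    convert zero
    funext t
    by_cases ht : t < 2 * n - 1
    · exact Finset.sum_eq_zero_iff.mp hd t (Finset.mem_range.mpr ht)
    · exact hf t (by omega)
  | succ d ih =>
    obtain ⟨t₁, ht₁, hft₁⟩ : ∃ t < 2 * n - 1, f t ≠ 0 := by
      by_contra! h
      simp [degC, Finset.sum_eq_zero (fun t ht => h t (Finset.mem_range.mp ht))] at hd
    obtain ⟨t₀, ht₀₁, g, rfl, hg0⟩ := exists_eq_add_single_of_ne_zero hft₁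
    have hg : SuppC n g := hf.mono le_self_add
    rw [degC_add_single (by omega)] at hd
    exact add_single g t₀ (by omega) hg hg0 (ih hg (by omega))

end Exponents

lemma List.foldr_pow_of_forall_eq_zero {R M : Type*} [CommSemiring R] [AddCommMonoid M]
    [Module R M] (A : ℕ → Module.End R M) {g : ℕ → ℕ} {L : List ℕ} (hg : ∀ t ∈ L, g t = 0)
    (v : M) : L.foldr (fun t w => (A t ^ g t) w) v = v := by
  induction L with
  | nil => rfl
  | cons a L ih => simp [hg a (by simp), ih (fun t ht => hg t (by simp [ht]))]

lemma List.foldr_range_pow_add_single {R M : Type*} [CommSemiring R] [AddCommMonoid M]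
    [Module R M] (A : ℕ → Module.End R M) {f : ℕ → ℕ} {t₀ N : ℕ} (ht : t₀ < N)
    (hf : ∀ s < t₀, f s = 0) (v : M) :
    (List.range N).foldr (fun t w => (A t ^ (f + Pi.single t₀ 1 : ℕ → ℕ) t) w) v =
      A t₀ ((List.range N).foldr (fun t w => (A t ^ f t) w) v) := by
  induction N generalizing v with
  | zero => omega
  | succ N ih =>
    simp only [List.range_succ, List.foldr_append, List.foldr_cons, List.foldr_nil]
    rcases (Nat.lt_succ_iff.mp ht).lt_or_eq with ht | rfl
    · rw [Pi.add_apply, Pi.single_eq_of_ne (by omega), add_zero, ih ht]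
    · rw [List.foldr_pow_of_forall_eq_zero A (fun s hs => ?_),
        List.foldr_pow_of_forall_eq_zero A (fun s hs => hf s (List.mem_range.mp hs)),
        Pi.add_apply, Pi.single_eq_same, pow_succ', Module.End.mul_apply]
      have hs := List.mem_range.mp hs
      simp [hf s hs, hs.ne]

section Monomials

variable {n : ℕ} {V : Type} [AddCommGroup V] [Module ℂ V]
  [LieRingModule (spAlgC n) V] [LieModule ℂ (spAlgC n) V] {v : V}

@[simp]
lemma rActC_zero : rActC n 0 v = v :=
  List.foldr_pow_of_forall_eq_zero _ (fun _ _ => rfl) v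

lemma rActC_add_single {f : ℕ → ℕ} {t : ℕ} (ht : t < 2 * n - 1) (hf : ∀ s < t, f s = 0) :
    rActC n (f + Pi.single t 1) v = ⁅FspC n n (facC n t), rActC n f v⁆ :=
  List.foldr_range_pow_add_single (fun t => LieModule.toEnd ℂ _ V (FspC n n (facC n t))) ht hf v

variable (n) in
noncomputable def monomialSpan (v : V) (d : ℕ) (w : ℕ → ℤ) : Submodule ℂ V :=
  Submodule.span ℂ {u | ∃ g, SuppC n g ∧ degC n g ≤ d ∧ wtLev n g = w ∧ u = rActC n g v}

lemma rActC_mem_monomialSpan {g : ℕ → ℕ} {d : ℕ} {w : ℕ → ℤ} (hg : SuppC n g)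
    (hd : degC n g ≤ d) (hw : wtLev n g = w) : rActC n g v ∈ monomialSpan n v d w :=
  Submodule.subset_span ⟨g, hg, hd, hw, rfl⟩

lemma monomialSpan_mono {d d' : ℕ} (hd : d ≤ d') (w : ℕ → ℤ) :
    monomialSpan n v d w ≤ monomialSpan n v d' w :=
  Submodule.span_mono fun _ ⟨g, hg, hdg, hw, hu⟩ => ⟨g, hg, hdg.trans hd, hw, hu⟩

lemma lie_mem_of_mem_monomialSpan {d : ℕ} {w : ℕ → ℤ} {T : Submodule ℂ V} (y : spAlgC n)
    {u : V} (hu : u ∈ monomialSpan n v d w)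
    (h : ∀ g, SuppC n g → degC n g ≤ d → wtLev n g = w → ⁅y, rActC n g v⁆ ∈ T) :
    ⁅y, u⁆ ∈ T := by
  refine Submodule.span_le (p := T.comap (LieModule.toEnd ℂ _ V y)) |>.mpr ?_ hu
  rintro _ ⟨g, hg, hd, hw, rfl⟩
  exact h g hg hd hw

/-- Straightening in `U(r)`: moving `F_{n,k}` past the earlier factors of a monomial only
produces commutators in `ℂ F_{n,−n}`, and `F_{n,−n}` is the first factor. The induction is on the
degree, then on the position of `F_{n,k}` in the factor sequence. -/
theorem lie_FspC_last_rActC_mem {d t : ℕ} (ht : t < 2 * n - 1) {f : ℕ → ℕ} (hf : SuppC n f)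
    (hd : degC n f ≤ d) :
    ⁅FspC n n (facC n t), rActC n f v⁆ ∈
      monomialSpan n v (d + 1) (wtLev n f + wtF n (facC n t)) := by
  induction d using Nat.strong_induction_on generalizing t f with
  | _ d ihd =>
  induction t using Nat.strong_induction_on generalizing f with
  | _ t iht =>
  by_cases hlow : ∀ s < t, f s = 0
  · rw [← rActC_add_single ht hlow]
    exact rActC_mem_monomialSpan (hf.add_single ht) (by rw [degC_add_single ht]; omega)
      (wtLev_add_single ht)
  push Not at hlow
  obtain ⟨t₁, ht₁, hft₁⟩ := hlow
  obtain ⟨t₀, ht₀₁, g, rfl, hg0⟩ := exists_eq_add_single_of_ne_zero hft₁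
  have ht₀ : t₀ < 2 * n - 1 := by omega
  have hg : SuppC n g := hf.mono le_self_add
  rw [degC_add_single ht₀] at hd
  obtain ⟨d', rfl⟩ : ∃ d', d = d' + 1 := ⟨d - 1, by omega⟩
  obtain ⟨hk, hkn⟩ := facC_valid ht
  obtain ⟨hc, hcn⟩ := facC_valid ht₀
  rw [rActC_add_single ht₀ hg0, leibniz_lie, lie_FspC_last_FspC_last hk hc hkn hcn,
    wtLev_add_single ht₀]
  refine add_mem ?_ ?_
  · split_ifs with hck
    · rw [smul_lie]
      refine Submodule.smul_mem _ _ (monomialSpan_mono (d := d' + 1) (by omega) _ ?_)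
      have hcentral := ihd d' (by omega) (t := 0) (f := g) (by omega) hg (by omega)
      rw [facC_zero] at hcentral
      convert hcentral using 2
      rw [hck, add_assoc, wtF_neg_add_wtF_self hk.last.1 hk.1]
    · rw [zero_lie]
      exact zero_mem _
  · refine lie_mem_of_mem_monomialSpan _ (ihd d' (by omega) ht hg (by omega))
      fun g' hg' hdg' hwg' => ?_
    convert iht t₀ (by omega) ht₀ hg' hdg' using 2
    rw [hwg']
    abel

lemma lie_FspC_last_rActC_mem_of_validC {k : ℤ} (hk : ValidC n k) (hkn : k ≠ n) {f : ℕ → ℕ}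
    (hf : SuppC n f) :
    ⁅FspC n n k, rActC n f v⁆ ∈ monomialSpan n v (degC n f + 1) (wtLev n f + wtF n k) := by
  obtain ⟨t, ht, rfl⟩ := exists_facC_eq hk hkn
  exact lie_FspC_last_rActC_mem ht hf le_rfl

theorem lie_FspC_rActC_mem {i j : ℤ} (hi : ValidC (n - 1) i) (hj : ValidC (n - 1) j)
    (hv : ⁅FspC n i j, v⁆ = 0) {f : ℕ → ℕ} (hf : SuppC n f) :
    ⁅FspC n i j, rActC n f v⁆ ∈ monomialSpan n v (degC n f + 1) (wtLev n f + wtF i j) := by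
  refine SuppC.induction_on_front (by simp [hv]) (fun g t ht hg hg0 ih => ?_) hf
  obtain ⟨hc, -⟩ := facC_valid ht
  rw [rActC_add_single ht hg0, leibniz_lie, lie_FspC_FspC_last hi hj hc, degC_add_single ht,
    wtLev_add_single ht]
  refine add_mem ?_ ?_
  · rw [sub_lie]
    refine sub_mem ?_ ?_ <;> split_ifs with h
    · rw [smul_lie]
      refine Submodule.smul_mem _ _ (monomialSpan_mono (d := degC n g + 1) (by omega) _ ?_)
      convert lie_FspC_last_rActC_mem_of_validC hi.of_pred.neg hi.ne_last_of_pred.2 hg using 2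
      rw [h, add_assoc, wtF_neg_add_wtF hi.1 hj.1]
    · rw [zero_lie]
      exact zero_mem _
    · refine monomialSpan_mono (d := degC n g + 1) (by omega) _ ?_
      convert lie_FspC_last_rActC_mem_of_validC hj.of_pred hj.ne_last_of_pred.1 hg using 2
      rw [h, add_assoc, wtF_add_wtF]
    · rw [zero_lie]
      exact zero_mem _
  · exact lie_mem_of_mem_monomialSpan _ ih fun g' hg' hdg' hwg' => by
      convert lie_FspC_last_rActC_mem ht hg' hdg' using 2
      rw [hwg']
      abel

end Monomials

lemma mem_span_FspC_of_coe_mem {n : ℕ} {x : spAlgC n}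
    (hx : (x : glC (2 * n)) ∈ Submodule.span ℂ
      {y | ∃ i j : ℤ, ValidC (n - 1) i ∧ ValidC (n - 1) j ∧ i < j ∧ y = FmatZ n i j}) :
    x ∈ Submodule.span ℂ
      {y | ∃ i j : ℤ, ValidC (n - 1) i ∧ ValidC (n - 1) j ∧ i < j ∧ y = FspC n i j} := by
  rw [← Submodule.apply_mem_span_image_iff_mem_span (f := (spAlgC n).toSubmodule.subtype)
    Subtype.val_injective]
  refine Submodule.span_mono ?_ hx
  rintro _ ⟨i, j, hi, hj, hij, rfl⟩
  exact ⟨_, ⟨i, j, hi, hj, hij, rfl⟩, FspC_coe hi.of_pred hj.of_pred⟩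

theorem sp_order_satisfies_br_general (n : ℕ) :
    ∀ (V : Type) [AddCommGroup V] [Module ℂ V] [LieRingModule (spAlgC n) V]
      [LieModule ℂ (spAlgC n) V] [FiniteDimensional ℂ V]
      [LieModule.IsIrreducible ℂ (spAlgC n) V]
      (lam : ℕ → ℤ) (v : V),
      (∀ i, 1 ≤ i → i < n → lam (i + 1) ≤ lam i) → (∀ i, 1 ≤ i → i ≤ n → lam i ≤ 0) →
      v ≠ 0 →
      (∀ i j : ℤ, ValidC n i → ValidC n j → i < j → ⁅FspC n i j, v⁆ = 0) →
      (∀ i : ℕ, 1 ≤ i → i ≤ n → ⁅FspC n (i : ℤ) (i : ℤ), v⁆ = ((lam i : ℂ)) • v) →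
      ∀ x : spAlgC n,
        (x : glC (2 * n)) ∈ Submodule.span ℂ
          {y | ∃ i j : ℤ, ValidC (n - 1) i ∧ ValidC (n - 1) j ∧ i < j ∧ y = FmatZ n i j} →
        ∀ e : ℕ → ℕ, SuppC n e → e ≠ 0 →
        ⁅x, rActC n e v⁆ ∈
          Submodule.span ℂ
            {u : V | ∃ f, SuppC n f ∧ ltC n f e ∧
              ∃ l : List (ℤ × ℤ),
                (∀ y ∈ l, ValidC (n - 1) y.1 ∧ ValidC (n - 1) y.2 ∧ y.2 < y.1) ∧
                u = l.foldr (fun (y : ℤ × ℤ) w => ⁅FspC n y.1 y.2, w⁆) (rActC n f v)} := by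
  intro V _ _ _ _ _ _ lam v _ _ _ hv _ x hx e he _
  replace hx := mem_span_FspC_of_coe_mem hx
  induction hx using Submodule.span_induction with
  | mem y hy =>
    obtain ⟨i, j, hi, hj, hij, rfl⟩ := hy
    refine Submodule.span_le.mpr ?_
      (lie_FspC_rActC_mem hi hj (hv i j hi.of_pred hj.of_pred hij) he)
    rintro _ ⟨g, hg, -, hwg, rfl⟩
    refine Submodule.subset_span
      ⟨g, hg, Or.inl ⟨i, j, hi.of_pred, hj.of_pred, hij, ?_⟩, [], by simp, rfl⟩
    rw [hwg, add_sub_cancel_left]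
  | zero => simp
  | add y z _ _ hy hz => rw [add_lie]; exact add_mem hy hz
  | smul a y _ hy => rw [smul_lie]; exact Submodule.smul_mem _ a hy

theorem sp_order_satisfies_br (n : ℕ) (hn : 2 ≤ n) :
    ∀ (V : Type) [AddCommGroup V] [Module ℂ V] [LieRingModule (spAlgC n) V]
      [LieModule ℂ (spAlgC n) V] [FiniteDimensional ℂ V]
      [LieModule.IsIrreducible ℂ (spAlgC n) V]
      (lam : ℕ → ℤ) (v : V),
      (∀ i, 1 ≤ i → i < n → lam (i + 1) ≤ lam i) → (∀ i, 1 ≤ i → i ≤ n → lam i ≤ 0) →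
      v ≠ 0 →
      (∀ i j : ℤ, ValidC n i → ValidC n j → i < j → ⁅FspC n i j, v⁆ = 0) →
      (∀ i : ℕ, 1 ≤ i → i ≤ n → ⁅FspC n (i : ℤ) (i : ℤ), v⁆ = ((lam i : ℂ)) • v) →
      ∀ x : spAlgC n,
        (x : glC (2 * n)) ∈ Submodule.span ℂ
          {y | ∃ i j : ℤ, ValidC (n - 1) i ∧ ValidC (n - 1) j ∧ i < j ∧ y = FmatZ n i j} →
        ∀ e : ℕ → ℕ, SuppC n e → e ≠ 0 →
        ⁅x, rActC n e v⁆ ∈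
          Submodule.span ℂ
            {u : V | ∃ f, SuppC n f ∧ ltC n f e ∧
              ∃ l : List (ℤ × ℤ),
                (∀ y ∈ l, ValidC (n - 1) y.1 ∧ ValidC (n - 1) y.2 ∧ y.2 < y.1) ∧
                u = l.foldr (fun (y : ℤ × ℤ) w => ⁅FspC n y.1 y.2, w⁆) (rActC n f v)} :=
  sp_order_satisfies_br_general n
end

section
/- Let d_1,…,d_n be nonnegative integers. Then the number of tuples (b, b_2,…,b_n) of nonnegative integers satisfying b_k ≤ d_k for 2 ≤ k ≤ n, b_k ≤ d_1 + Σ_{i=2}^{k−1}(d_i − 2 b_i) for 2 ≤ k ≤ n, and b + 2 Σ_{k=2}^{n} b_k ≤ Σ_{i=1}^{n} d_i, is equal to ∏_{i=1}^{n} (d_i + 1). -/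
/-!
Choose `b₂, …, bₙ` one at a time. Before step `k` there is room
`r = d₁ + ∑_{i<k} (d_i - 2 b_i) ≥ 0`; step `k` picks `b_k ≤ min d_k r` and leaves room
`r + d_k - 2 b_k`, and at the end `b` takes `r + 1` values. So the count is `∑ (r + 1)` over the
admissible tuples, and the Clebsch–Gordan identity `∑_{j ≤ min a c} (a + c - 2j + 1) = (a+1)(c+1)`
shows that each step multiplies this weighted count by `d_k + 1`.
-/

open Finset Function

theorem sum_range_min_add_one_sub_two_mul (a c : ℕ) :
    ∑ j ∈ range (min a c + 1), ((a + c + 1 : ℤ) - 2 * j) = (a + 1) * (c + 1) := by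
  induction a generalizing c with
  | zero => simp
  | succ a ih =>
    cases c with
    | zero => simp
    | succ c =>
      rw [Nat.succ_min_succ, sum_range_succ']
      have shift : ∀ j : ℕ, ((a + 1 : ℕ) + (c + 1 : ℕ) + 1 : ℤ) - 2 * (j + 1 : ℕ)
          = (a + c + 1 : ℤ) - 2 * j := fun j => by push_cast; ring
      simp only [shift, ih]
      push_cast
      ring

theorem Set.ncard_setOf_mem_and_le {α : Type*} (s : Finset α) (w : α → ℕ) :
    {p : ℕ × α | p.2 ∈ s ∧ p.1 ≤ w p.2}.ncard = ∑ a ∈ s, (w a + 1) := by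
  classical
  have : {p : ℕ × α | p.2 ∈ s ∧ p.1 ≤ w p.2} =
      ((s.sigma fun a => Finset.range (w a + 1)).image
        fun x : Σ _ : α, ℕ => (x.2, x.1) : Set (ℕ × α)) := by
    ext ⟨b, a⟩
    simp
  rw [this, ncard_coe_finset, Finset.card_image_of_injective, Finset.card_sigma]
  · simp
  · rintro ⟨a, b⟩ ⟨a', b'⟩ ⟨⟩
    rfl

namespace MultiplicityCount

variable (d : ℕ → ℕ)

/-- Summing from `i = 1` makes `room d f 1 = 0`, which forces `f 1 = 0`; after that this is the
paper's bound `d₁ + ∑_{i=2}^{k-1} (d_i - 2 b_i)` for `b_k` (`room_eq_add_sum_Ico`). -/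
def room (f : ℕ → ℕ) (k : ℕ) : ℤ := ∑ i ∈ Ico 1 k, ((d i : ℤ) - 2 * f i)

open scoped Classical in
noncomputable def admissible : ℕ → Finset (ℕ → ℕ)
  | 0 => {0}
  | n + 1 => (admissible n).biUnion fun f =>
      (range (min (d (n + 1)) (room d f (n + 1)).toNat + 1)).image (update f (n + 1))

variable {d}

theorem room_update_of_le {f : ℕ → ℕ} {k m : ℕ} (hk : k ≤ m) (j : ℕ) :
    room d (update f m j) k = room d f k :=
  sum_congr rfl fun i hi => by rw [update_of_ne (by simp at hi; omega)]

theorem room_succ (f : ℕ → ℕ) {k : ℕ} (hk : 1 ≤ k) :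
    room d f (k + 1) = room d f k + d k - 2 * f k := by
  rw [room, sum_Ico_succ_top hk, room]; ring

theorem room_update_succ (f : ℕ → ℕ) (n j : ℕ) :
    room d (update f (n + 1) j) (n + 2) = room d f (n + 1) + d (n + 1) - 2 * j := by
  rw [room_succ _ (by omega), room_update_of_le le_rfl, update_self]

theorem apply_eq_zero_of_mem_admissible {n : ℕ} {f : ℕ → ℕ} (hf : f ∈ admissible d n) {k : ℕ}
    (hk : k ∉ Icc 1 n) : f k = 0 := by
  induction n generalizing f with
  | zero => simp_all [admissible]
  | succ n ih =>
    simp only [admissible, mem_biUnion, mem_image] at hf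
    obtain ⟨g, hg, j, -, rfl⟩ := hf
    rw [update_of_ne (by simp at hk; omega)]
    exact ih hg (by simp at hk ⊢; omega)

theorem update_succ_zero_of_mem_admissible {n : ℕ} {f : ℕ → ℕ} (hf : f ∈ admissible d n) :
    update f (n + 1) 0 = f := by
  rw [← apply_eq_zero_of_mem_admissible hf (k := n + 1) (by simp), update_eq_self]

theorem room_nonneg {n : ℕ} {f : ℕ → ℕ} (hf : f ∈ admissible d n) : 0 ≤ room d f (n + 1) := by
  induction n generalizing f with
  | zero => simp [room]
  | succ n ih =>
    simp only [admissible, mem_biUnion, mem_image, mem_range, Nat.lt_succ_iff, le_min_iff] at hf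
    obtain ⟨g, hg, j, ⟨hjd, hjr⟩, rfl⟩ := hf
    rw [Int.le_toNat (ih hg)] at hjr
    rw [room_update_succ]
    omega

theorem mem_admissible_succ {n : ℕ} {f : ℕ → ℕ} :
    f ∈ admissible d (n + 1) ↔ update f (n + 1) 0 ∈ admissible d n ∧
      f (n + 1) ≤ d (n + 1) ∧ (f (n + 1) : ℤ) ≤ room d f (n + 1) := by
  simp only [admissible, mem_biUnion, mem_image, mem_range, Nat.lt_succ_iff, le_min_iff]
  constructor
  · rintro ⟨g, hg, j, ⟨hjd, hjr⟩, rfl⟩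
    rw [update_idem, update_succ_zero_of_mem_admissible hg, update_self, room_update_of_le le_rfl,
      ← Int.le_toNat (room_nonneg hg)]
    exact ⟨hg, hjd, hjr⟩
  · rintro ⟨hg, hjd, hjr⟩
    refine ⟨_, hg, f (n + 1), ⟨hjd, ?_⟩, by rw [update_idem, update_eq_self]⟩
    rw [room_update_of_le le_rfl, Int.le_toNat (by omega)]
    exact hjr

theorem mem_admissible_iff {n : ℕ} {f : ℕ → ℕ} :
    f ∈ admissible d n ↔
      (∀ k ∉ Icc 1 n, f k = 0) ∧ ∀ k ∈ Icc 1 n, f k ≤ d k ∧ (f k : ℤ) ≤ room d f k := by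
  induction n generalizing f with
  | zero => simp [admissible, funext_iff]
  | succ n ih =>
    have upd : ∀ k, k ≠ n + 1 → update f (n + 1) 0 k = f k := fun k hk => update_of_ne hk _ _
    simp only [mem_Icc] at ih ⊢
    rw [mem_admissible_succ, ih]
    constructor
    · rintro ⟨⟨hsupp, hle⟩, hd, hr⟩
      refine ⟨fun k hk => ?_, fun k hk => ?_⟩
      · rw [← upd k (by omega)]
        exact hsupp k (by omega)
      · rcases eq_or_ne k (n + 1) with rfl | hkn
        · exact ⟨hd, hr⟩
        · have := hle k (by omega)
          rwa [upd k hkn, room_update_of_le (by omega)] at this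
    · rintro ⟨hsupp, hle⟩
      refine ⟨⟨fun k hk => ?_, fun k hk => ?_⟩, hle (n + 1) (by omega)⟩
      · rcases eq_or_ne k (n + 1) with rfl | hkn
        · exact update_self _ _ _
        · rw [upd k hkn]
          exact hsupp k (by omega)
      · rw [upd k (by omega), room_update_of_le (by omega)]
        exact hle k (by omega)

theorem sum_room_add_one_admissible (n : ℕ) :
    ∑ f ∈ admissible d n, (room d f (n + 1) + 1) = ∏ i ∈ Icc 1 n, ((d i : ℤ) + 1) := by
  induction n with
  | zero => simp [admissible, room]
  | succ n ih =>
    classical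
    have hdisj : (admissible d n : Set (ℕ → ℕ)).PairwiseDisjoint fun g =>
        (range (min (d (n + 1)) (room d g (n + 1)).toNat + 1)).image (update g (n + 1)) := by
      intro g hg g' hg' hne
      refine disjoint_left.2 ?_
      simp only [mem_image]
      rintro _ ⟨j, -, rfl⟩ ⟨j', -, h⟩
      have := congrArg (update · (n + 1) 0) h
      simp only [update_idem, update_succ_zero_of_mem_admissible hg,
        update_succ_zero_of_mem_admissible hg'] at this
      exact hne this.symm
    rw [admissible, sum_biUnion hdisj, prod_Icc_succ_top (by omega), ← ih, sum_mul]
    refine sum_congr rfl fun g hg => ?_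
    rw [sum_image (update_injective g _).injOn]
    have := sum_range_min_add_one_sub_two_mul (d (n + 1)) (room d g (n + 1)).toNat
    rw [Int.toNat_of_nonneg (room_nonneg hg)] at this
    rw [mul_comm, ← this]
    exact sum_congr rfl fun j _ => by rw [room_update_succ]; ring

theorem room_eq_add_sum_Ico {f : ℕ → ℕ} (hf : f 1 = 0) {k : ℕ} (hk : 2 ≤ k) :
    room d f k = d 1 + ∑ i ∈ Ico 2 k, ((d i : ℤ) - 2 * f i) := by
  rw [room, sum_eq_sum_Ico_succ_bot (by omega), hf]
  simp

theorem room_succ_eq_sub {f : ℕ → ℕ} (hf : f 1 = 0) (n : ℕ) :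
    room d f (n + 1) = ∑ i ∈ Icc 1 n, (d i : ℤ) - 2 * ∑ k ∈ Icc 2 n, (f k : ℤ) := by
  have : ∑ k ∈ Icc 2 n, (f k : ℤ) = ∑ k ∈ Icc 1 n, (f k : ℤ) :=
    sum_subset (Icc_subset_Icc_left one_le_two) fun k hk hk' => by
      obtain rfl : k = 1 := by simp at hk hk'; omega
      simp [hf]
  rw [room, Ico_add_one_right_eq_Icc, sum_sub_distrib, this, mul_sum]

theorem mem_admissible_iff' {n : ℕ} {f : ℕ → ℕ} :
    f ∈ admissible d n ↔ (∀ k, (k < 2 ∨ n < k) → f k = 0) ∧ (∀ k, 2 ≤ k → k ≤ n → f k ≤ d k) ∧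
      ∀ k, 2 ≤ k → k ≤ n → (f k : ℤ) ≤ d 1 + ∑ i ∈ Ico 2 k, ((d i : ℤ) - 2 * f i) := by
  rw [mem_admissible_iff]
  simp only [mem_Icc]
  constructor
  · rintro ⟨hsupp, hle⟩
    have hf1 : f 1 = 0 := by
      by_cases hn : 1 ≤ n
      · simpa [room] using (hle 1 ⟨le_rfl, hn⟩).2
      · exact hsupp 1 (by omega)
    refine ⟨fun k hk => ?_, fun k hk hkn => (hle k ⟨by omega, hkn⟩).1, fun k hk hkn => ?_⟩
    · obtain rfl | hk := eq_or_ne k 1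
      · exact hf1
      · exact hsupp k (by omega)
    · rw [← room_eq_add_sum_Ico hf1 hk]
      exact (hle k ⟨by omega, hkn⟩).2
  · rintro ⟨hsupp, hd, hr⟩
    refine ⟨fun k hk => hsupp k (by omega), fun k ⟨hk, hkn⟩ => ?_⟩
    obtain rfl | hk := eq_or_ne k 1
    · simp [room, hsupp 1 (by omega)]
    · rw [room_eq_add_sum_Ico (hsupp 1 (by omega)) (by omega)]
      exact ⟨hd k (by omega) hkn, hr k (by omega) hkn⟩

theorem le_toNat_room_iff {n : ℕ} {f : ℕ → ℕ} (hf : f ∈ admissible d n) (b : ℕ) :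
    b ≤ (room d f (n + 1)).toNat ↔
      (b : ℤ) + 2 * ∑ k ∈ Icc 2 n, (f k : ℤ) ≤ ∑ i ∈ Icc 1 n, (d i : ℤ) := by
  rw [Int.le_toNat (room_nonneg hf), room_succ_eq_sub ((mem_admissible_iff'.1 hf).1 1 (by omega))]
  omega

end MultiplicityCount

open MultiplicityCount in
theorem multiplicity_count_general (n : ℕ) (d : ℕ → ℕ) :
    Set.ncard {p : ℕ × (ℕ → ℕ) |
        (∀ k, (k < 2 ∨ n < k) → p.2 k = 0) ∧
        (∀ k, 2 ≤ k → k ≤ n → p.2 k ≤ d k) ∧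
        (∀ k, 2 ≤ k → k ≤ n →
          (p.2 k : ℤ) ≤ (d 1 : ℤ) + ∑ i ∈ Finset.Ico 2 k, ((d i : ℤ) - 2 * (p.2 i : ℤ))) ∧
        ((p.1 : ℤ) + 2 * ∑ k ∈ Finset.Icc 2 n, (p.2 k : ℤ) ≤ ∑ i ∈ Finset.Icc 1 n, (d i : ℤ))} =
      ∏ i ∈ Finset.Icc 1 n, (d i + 1) := by
  calc _ = {p : ℕ × (ℕ → ℕ) | p.2 ∈ admissible d n ∧ p.1 ≤ (room d p.2 (n + 1)).toNat}.ncard := by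
        congr 1
        ext ⟨b, f⟩
        simp only [Set.mem_ofPred_eq]
        constructor
        · rintro ⟨h₁, h₂, h₃, hb⟩
          have hf := mem_admissible_iff'.2 ⟨h₁, h₂, h₃⟩
          exact ⟨hf, (le_toNat_room_iff hf b).2 hb⟩
        · rintro ⟨hf, hb⟩
          obtain ⟨h₁, h₂, h₃⟩ := mem_admissible_iff'.1 hf
          exact ⟨h₁, h₂, h₃, (le_toNat_room_iff hf b).1 hb⟩
    _ = ∑ f ∈ admissible d n, ((room d f (n + 1)).toNat + 1) :=
        Set.ncard_setOf_mem_and_le (admissible d n) fun f => (room d f (n + 1)).toNat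
    _ = ∏ i ∈ Icc 1 n, (d i + 1) := by
        zify
        rw [← sum_room_add_one_admissible n]
        exact sum_congr rfl fun f hf => by rw [Int.toNat_of_nonneg (room_nonneg hf)]

/--
Let `d 1, …, d n` be nonnegative integers.  The number of tuples
`(b, b₂, …, b_n)` of nonnegative integers satisfying
`b_k ≤ d_k` for `2 ≤ k ≤ n`,
`b_k ≤ d₁ + ∑_{i=2}^{k-1} (d_i − 2 b_i)` for `2 ≤ k ≤ n`, and
`b + 2 ∑_{k=2}^{n} b_k ≤ ∑_{i=1}^{n} d_i`,
equals `∏_{i=1}^{n} (d_i + 1)`.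
(Tuples are encoded as pairs `(b, bb)` with `bb : ℕ → ℕ` vanishing outside `[2, n]`.)
-/
theorem multiplicity_count (n : ℕ) (hn : 1 ≤ n) (d : ℕ → ℕ) :
    Set.ncard {p : ℕ × (ℕ → ℕ) |
        (∀ k, (k < 2 ∨ n < k) → p.2 k = 0) ∧
        (∀ k, 2 ≤ k → k ≤ n → p.2 k ≤ d k) ∧
        (∀ k, 2 ≤ k → k ≤ n →
          (p.2 k : ℤ) ≤ (d 1 : ℤ) + ∑ i ∈ Finset.Ico 2 k, ((d i : ℤ) - 2 * (p.2 i : ℤ))) ∧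
        ((p.1 : ℤ) + 2 * ∑ k ∈ Finset.Icc 2 n, (p.2 k : ℤ) ≤ ∑ i ∈ Finset.Icc 1 n, (d i : ℤ))} =
      ∏ i ∈ Finset.Icc 1 n, (d i + 1) :=
  multiplicity_count_general n d
end
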